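/- Let V be a finite nonempty type and let E : V → V → Prop be a directed graph that is strongly connected, i.e. for all vertices u, v there is a nonempty directed path from u to v (Relation.TransGen E u v). Let W ⊆ V be a nonempty set and g : V → V a map such that: (i) for every v ∈ W one has E v (g v); (ii) g maps W into W; and (iii) every v ∈ W is g-periodic, i.e. there exists k > 0 with g^[k] v = v (so the pair (W, g) encodes a nonempty collection of pairwise vertex-disjoint directed cycles of E). Then there exists a map f : V → V such that: (a) E v (f v) for every v ∈ V (so f selects exactly one outgoing E-edge at each vertex, giving a spanning functional subgraph of E); (b) f agrees with g on W; and (c) the set of f-periodic points {v ∈ V : ∃ k > 0, f^[k] v = v} is exactly W (so the cycles of the functional subgraph are exactly the given cycles). -/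
import Mathlib

/-- Sets of vertices from which `W` is reachable in at most `n` steps. -/
def cycleExtReach {V : Type*} (E : V → V → Prop) (W : Set V) : ℕ → Set V
  | 0 => W
  | n + 1 => cycleExtReach E W n ∪ {v | ∃ u, E v u ∧ u ∈ cycleExtReach E W n}

/-- Lemma 3.2 (CycleExt): given a strongly connected directed graph `E` on a finite
nonempty vertex type `V` and a nonempty collection of pairwise vertex-disjoint directed
cycles of `E`, encoded by a nonempty set `W` with a successor map `g` that follows edges of
`E` on `W`, maps `W` into `W`, and has every point of `W` periodic, there is a spanning
functional subgraph `f` of `E` agreeing with `g` on `W` whose periodic points are exactly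
`W`. -/
theorem cycle_extension
    (V : Type*) [Finite V] [Nonempty V]
    (E : V → V → Prop)
    (hconn : ∀ u v : V, Relation.TransGen E u v)
    (W : Set V) (hW : W.Nonempty)
    (g : V → V)
    (hedge : ∀ v ∈ W, E v (g v))
    (hmaps : ∀ v ∈ W, g v ∈ W)
    (hper : ∀ v ∈ W, ∃ k > 0, g^[k] v = v) :
    ∃ f : V → V,
      (∀ v : V, E v (f v)) ∧
      (∀ v ∈ W, f v = g v) ∧
      {v : V | ∃ k > 0, f^[k] v = v} = W := by
  classical
  set A := cycleExtReach E W with hA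
  -- every vertex is in some A n
  obtain ⟨w₀, hw₀⟩ := hW
  have hex : ∀ v : V, ∃ n, v ∈ A n := by
    intro v
    have h : Relation.ReflTransGen E v w₀ := (hconn v w₀).to_reflTransGen
    induction h using Relation.ReflTransGen.head_induction_on with
    | refl => exact ⟨0, hw₀⟩
    | head hvc _ ih =>
      obtain ⟨n, hn⟩ := ih
      exact ⟨n + 1, Or.inr ⟨_, hvc, hn⟩⟩
  set d : V → ℕ := fun v => Nat.find (hex v) with hd
  have hdspec : ∀ v, v ∈ A (d v) := fun v => Nat.find_spec (hex v)
  have hdW : ∀ v ∈ W, d v = 0 := by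
    intro v hv
    exact Nat.eq_zero_of_le_zero (Nat.find_le (by exact hv))
  -- key step: a good successor exists for each vertex
  have key : ∀ v : V, ∃ u, E v u ∧ (v ∈ W → u = g v) ∧ (v ∉ W → d u < d v) := by
    intro v
    by_cases hv : v ∈ W
    · exact ⟨g v, hedge v hv, fun _ => rfl, fun h => absurd hv h⟩
    · have hd0 : d v ≠ 0 := by
        intro h0
        have := hdspec v
        rw [h0] at this
        exact hv this
      obtain ⟨m, hm⟩ := Nat.exists_eq_succ_of_ne_zero hd0
      have hvA : v ∈ A m ∪ {v | ∃ u, E v u ∧ u ∈ A m} := by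
        have h := hdspec v
        rw [hm] at h
        exact h
      have hvnA : v ∉ A m := by
        intro h
        have : d v ≤ m := Nat.find_le h
        omega
      rcases hvA with h | ⟨u, hEu, huA⟩
      · exact absurd h hvnA
      · refine ⟨u, hEu, fun h => absurd h hv, fun _ => ?_⟩
        have : d u ≤ m := Nat.find_le huA
        omega
  choose f hfE hfW hfd using key
  refine ⟨f, hfE, hfW, ?_⟩
  -- f agrees with g on W, iterates stay in W
  have hiter : ∀ k, ∀ v ∈ W, f^[k] v = g^[k] v ∧ f^[k] v ∈ W := by
    intro k
    induction k with
    | zero => exact fun v hv => ⟨rfl, hv⟩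
    | succ n ih =>
      intro v hv
      obtain ⟨h1, h2⟩ := ih v hv
      rw [Function.iterate_succ_apply', Function.iterate_succ_apply', h1,
        hfW _ (h1 ▸ h2)]
      exact ⟨rfl, hmaps _ (h1 ▸ h2)⟩
  -- d is nonincreasing along f
  have hmono : ∀ v, d (f v) ≤ d v := by
    intro v
    by_cases hv : v ∈ W
    · rw [hfW v hv, hdW _ (hmaps v hv)]; exact Nat.zero_le _
    · exact (hfd v hv).le
  have hmono' : ∀ k v, d (f^[k] v) ≤ d v := by
    intro k
    induction k with
    | zero => exact fun v => le_rfl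
    | succ n ih =>
      intro v
      rw [Function.iterate_succ_apply']
      exact (hmono _).trans (ih v)
  ext v
  simp only [Set.mem_setOf_eq]
  constructor
  · rintro ⟨k, hk, hkv⟩
    by_contra hv
    obtain ⟨m, rfl⟩ := Nat.exists_eq_succ_of_ne_zero hk.ne'
    rw [Function.iterate_succ_apply] at hkv
    have h1 := hmono' m (f v)
    rw [hkv] at h1
    have h2 : d (f v) < d v := hfd v hv
    omega
  · intro hv
    obtain ⟨k, hk, hkv⟩ := hper v hv
    exact ⟨k, hk, by rw [(hiter k v hv).1, hkv]⟩
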